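/- Let (R, 𝔪) be a commutative Noetherian local ring, M a finitely generated R-module of dimension d with dimension filtration D_0 ⊂ D_1 ⊂ ⋯ ⊂ D_t = M and d_i = dim D_i, and let x_1, …, x_d be a good system of parameters of M. Then (a) for each i = 1, …, t, the truncation x_1, …, x_{d_i} is a good system of parameters of D_i; and (b) for any d-tuple of positive integers n_1, …, n_d, the sequence x_1^{n_1}, …, x_d^{n_d} is again a good system of parameters of M. -/

import Mathlib

/-!
Over a Noetherian local ring, a finitely generated module `N` has `N/JN` of finite length iff
`𝔪 ⊆ √(J + ann N)`, because `Supp(N/JN) = Supp N ∩ V(J)`. Goodness says that the tail ideal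
`(x_{d_i+1}, …, x_d)` annihilates `D_i`, so
`(x_1, …, x_d) + ann M ⊆ (x_1, …, x_{d_i}) + ann D_i` and the truncated sequence is a system of
parameters of `D_i`; the intersection conditions restrict to `D_i` verbatim. Raising the `x_j`
to positive powers leaves the radical of the parameter ideal unchanged and only shrinks the
tail ideals.
-/

open IsLocalRing

/-- The Krull dimension of a module, `dim M = dim R/ann M`. -/
noncomputable def moduleDim (R : Type*) [CommRing R] (M : Type*) [AddCommGroup M]
    [Module R M] : WithBot ℕ∞ :=
  ringKrullDim (R ⧸ Module.annihilator R M)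

/-- The length of a module, as the Krull dimension of its lattice of submodules. -/
noncomputable def moduleLength (R : Type*) [CommRing R] (M : Type*) [AddCommGroup M]
    [Module R M] : WithBot ℕ∞ :=
  Order.krullDim (Submodule R M)

/-- The depth of a module over a local ring: the supremum of lengths of `M`-regular
sequences consisting of elements of the maximal ideal. -/
noncomputable def moduleDepth (R : Type*) [CommRing R] [IsLocalRing R] (M : Type*)
    [AddCommGroup M] [Module R M] : ℕ∞ :=
  sSup {n : ℕ∞ | ∃ rs : List R, (rs.length : ℕ∞) = n ∧ (∀ r ∈ rs, r ∈ maximalIdeal R) ∧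
    RingTheory.Sequence.IsRegular M rs}

/-- A module over a Noetherian local ring is Cohen-Macaulay if its depth equals its
Krull dimension. -/
def IsCM (R : Type*) [CommRing R] [IsLocalRing R] (M : Type*) [AddCommGroup M]
    [Module R M] : Prop :=
  (moduleDepth R M : WithBot ℕ∞) = moduleDim R M

/-- The zeroth local cohomology `H^0_𝔪(M)`: the submodule of elements annihilated by
some power of the maximal ideal. -/
noncomputable def H0m (R : Type*) [CommRing R] [IsLocalRing R] (M : Type*) [AddCommGroup M]
    [Module R M] : Submodule R M :=
  ⨆ n : ℕ, Submodule.torsionBySet R M ((maximalIdeal R ^ n : Ideal R) : Set R)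

/-- `x : Fin d → R` is a system of parameters of `M` (where `d = dim M`):
all `x i` lie in the maximal ideal and `M/(x₁,…,x_d)M` has finite length. -/
def IsSOP (R : Type*) [CommRing R] [IsLocalRing R] (M : Type*) [AddCommGroup M] [Module R M]
    {d : ℕ} (x : Fin d → R) : Prop :=
  (∀ i, x i ∈ maximalIdeal R) ∧
    IsFiniteLength R (M ⧸ (Ideal.span (Set.range x) • (⊤ : Submodule R M)))

/-- `Λ_{s,n}`: tuples of positive integers of size `s` summing to `s + n - 1`. -/
def Lambda (s n : ℕ) : Set (Fin s → ℕ) :=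
  {α | (∀ i, 1 ≤ α i) ∧ (∑ i, α i) = s + n - 1}

/-- The sequence `x` has the property of parametric decomposition:
`q^n M = ⋂_{α ∈ Λ_{d,n}} (x₁^{α₁},…,x_d^{α_d})M` for all `n ≥ 1`, where `q = (x₁,…,x_d)`. -/
def HasParamDecomp (R : Type*) [CommRing R] (M : Type*) [AddCommGroup M] [Module R M]
    {d : ℕ} (x : Fin d → R) : Prop :=
  ∀ n : ℕ, 1 ≤ n →
    (Ideal.span (Set.range x)) ^ n • (⊤ : Submodule R M) =
      ⨅ α ∈ Lambda d n, Ideal.span (Set.range fun i => x i ^ α i) • (⊤ : Submodule R M)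

/-- `D : Fin (t+1) → Submodule R M` is the dimension filtration of `M`:
`D 0 = H^0_𝔪(M)`, `D t = M`, and each `D i` is the largest submodule of `D (i+1)` of
strictly smaller dimension. -/
def IsDimFiltration (R : Type*) [CommRing R] [IsLocalRing R] (M : Type*) [AddCommGroup M]
    [Module R M] {t : ℕ} (D : Fin (t + 1) → Submodule R M) : Prop :=
  D 0 = H0m R M ∧ D (Fin.last t) = ⊤ ∧
    ∀ i : Fin t,
      D i.castSucc ≤ D i.succ ∧
      moduleDim R ↥(D i.castSucc) < moduleDim R ↥(D i.succ) ∧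
      ∀ N : Submodule R M, N ≤ D i.succ →
        moduleDim R ↥N < moduleDim R ↥(D i.succ) → N ≤ D i.castSucc

/-- Given the dimension filtration `D` with `d_i = ds i`, a system of parameters
`x₁,…,x_d` is good if `D_i ∩ (x_{d_i+1},…,x_d)M = 0` for all `i < t`. -/
def IsGoodSOP (R : Type*) [CommRing R] [IsLocalRing R] (M : Type*) [AddCommGroup M]
    [Module R M] {d t : ℕ} (D : Fin (t + 1) → Submodule R M) (ds : Fin (t + 1) → ℕ)
    (x : Fin d → R) : Prop :=
  IsSOP R M x ∧
    ∀ i : Fin (t + 1), (i : ℕ) < t →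
      D i ⊓ (Ideal.span {r : R | ∃ j : Fin d, ds i ≤ (j : ℕ) ∧ r = x j}) •
        (⊤ : Submodule R M) = ⊥

section FiniteLength

variable {R : Type*} [CommRing R] {M : Type*} [AddCommGroup M] [Module R M]

theorem radical_annihilator_quotient_smul_top [Module.Finite R M] (I : Ideal R) :
    (Module.annihilator R (M ⧸ I • (⊤ : Submodule R M))).radical =
      (I ⊔ Module.annihilator R M).radical := by
  rw [← PrimeSpectrum.zeroLocus_eq_iff, ← Module.support_eq_zeroLocus, Module.support_quotient,
    Module.support_eq_zeroLocus, PrimeSpectrum.zeroLocus_sup, Set.inter_comm]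

variable [IsLocalRing R] [IsNoetherianRing R]

theorem isArtinianRing_quotient_of_maximalIdeal_le_radical {I : Ideal R}
    (h : maximalIdeal R ≤ I.radical) : IsArtinianRing (R ⧸ I) := by
  rcases eq_or_ne I ⊤ with rfl | hI
  · exact Ring.isArtinian_of_zero_eq_one (Subsingleton.elim _ _)
  refine quotient_artinian_of_mem_minimalPrimes_of_isLocalRing I
    ⟨⟨inferInstance, le_maximalIdeal hI⟩, fun p hp _ => ?_⟩
  exact h.trans ((Ideal.radical_mono hp.2).trans hp.1.radical.le)

theorem exists_maximalIdeal_pow_smul_top_eq_bot [Module.Finite R M] [IsArtinian R M] :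
    ∃ n, maximalIdeal R ^ n • (⊤ : Submodule R M) = ⊥ := by
  obtain ⟨n, hn⟩ := IsArtinian.monotone_stabilizes (R := R) (M := M)
    ⟨fun n => OrderDual.toDual (maximalIdeal R ^ n • ⊤),
      fun _ _ h => Submodule.smul_mono_left (Ideal.pow_le_pow_right h)⟩
  refine ⟨n, Submodule.eq_bot_of_le_smul_of_le_jacobson_bot (maximalIdeal R) _
    (IsNoetherian.noetherian _) ?_ (maximalIdeal_le_jacobson ⊥)⟩
  rw [← Submodule.smul_assoc, smul_eq_mul, ← pow_succ']
  exact (congrArg OrderDual.ofDual (hn (n + 1) n.le_succ)).le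

theorem isFiniteLength_iff_maximalIdeal_le_radical_annihilator [Module.Finite R M] :
    IsFiniteLength R M ↔ maximalIdeal R ≤ (Module.annihilator R M).radical := by
  rw [isFiniteLength_iff_isNoetherian_isArtinian,
    and_iff_right (isNoetherian_of_isNoetherianRing_of_finite R M)]
  constructor
  · intro _
    obtain ⟨n, hn⟩ := exists_maximalIdeal_pow_smul_top_eq_bot (R := R) (M := M)
    rw [← Submodule.le_annihilator_iff, Submodule.annihilator_top] at hn
    exact fun a ha => ⟨n, hn (Ideal.pow_mem_pow ha n)⟩
  · intro h
    have := isArtinianRing_quotient_of_maximalIdeal_le_radical h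
    let _ := Module.quotientAnnihilator (R := R) (M := M)
    have := (Module.isTorsionBySet_annihilator R M).isScalarTower (S := R)
    have := Module.Finite.of_restrictScalars_finite R (R ⧸ Module.annihilator R M) M
    exact isArtinian_of_surjective_algebraMap
      (Ideal.Quotient.mk_surjective (I := Module.annihilator R M))

theorem isFiniteLength_quotient_smul_top_iff [Module.Finite R M] (I : Ideal R) :
    IsFiniteLength R (M ⧸ I • (⊤ : Submodule R M)) ↔
      maximalIdeal R ≤ (I ⊔ Module.annihilator R M).radical := by
  rw [isFiniteLength_iff_maximalIdeal_le_radical_annihilator,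
    radical_annihilator_quotient_smul_top]

theorem isFiniteLength_quotient_smul_top_of_le_radical [Module.Finite R M]
    {N : Type*} [AddCommGroup N] [Module R N] [Module.Finite R N]
    {I J : Ideal R} (hM : IsFiniteLength R (M ⧸ I • (⊤ : Submodule R M)))
    (hIJ : I ⊔ Module.annihilator R M ≤ (J ⊔ Module.annihilator R N).radical) :
    IsFiniteLength R (N ⧸ J • (⊤ : Submodule R N)) := by
  rw [isFiniteLength_quotient_smul_top_iff] at hM ⊢
  exact hM.trans (Ideal.radical_le_radical_iff.mpr hIJ)

end FiniteLength

section SystemOfParameters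

variable {R : Type*} [CommRing R] {M : Type*} [AddCommGroup M] [Module R M]

theorem Submodule.comap_subtype_inf_smul_top_eq_bot {N P : Submodule R M} {I J : Ideal R}
    (hIJ : I ≤ J) (h : P ⊓ J • (⊤ : Submodule R M) = ⊥) :
    P.comap N.subtype ⊓ I • (⊤ : Submodule R N) = ⊥ := by
  refine Submodule.map_injective_of_injective N.injective_subtype ?_
  rw [Submodule.map_bot, ← le_bot_iff, ← h]
  refine (Submodule.map_inf_le _).trans (inf_le_inf (Submodule.map_comap_le _ _) ?_)
  rw [Submodule.map_smul'', Submodule.map_top]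
  exact Submodule.smul_mono hIJ le_top

/-- The ideal `(x_{m+1}, …, x_d)`, in the 1-based indexing of the paper. -/
def tailIdeal {d : ℕ} (x : Fin d → R) (m : ℕ) : Ideal R :=
  Ideal.span {r | ∃ j : Fin d, m ≤ (j : ℕ) ∧ r = x j}

section tailIdeal

variable {d : ℕ} (x : Fin d → R)

theorem tailIdeal_eq_bot_of_le {m : ℕ} (h : d ≤ m) : tailIdeal x m = ⊥ := by
  refine Ideal.span_eq_bot.mpr ?_
  rintro r ⟨j, hj, -⟩
  exact absurd j.isLt (by omega)

theorem span_range_le_span_range_castLE_sup_tailIdeal {m : ℕ} (h : m ≤ d) :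
    Ideal.span (Set.range x) ≤
      Ideal.span (Set.range fun j : Fin m => x (Fin.castLE h j)) ⊔ tailIdeal x m := by
  refine Ideal.span_le.mpr ?_
  rintro _ ⟨j, rfl⟩
  by_cases hj : (j : ℕ) < m
  · exact Ideal.mem_sup_left (Ideal.subset_span (Set.mem_range.mpr ⟨⟨j, hj⟩, rfl⟩))
  · exact Ideal.mem_sup_right (Ideal.subset_span ⟨j, not_lt.mp hj, rfl⟩)

theorem tailIdeal_castLE_le {n : ℕ} (h : n ≤ d) (m : ℕ) :
    tailIdeal (fun j : Fin n => x (Fin.castLE h j)) m ≤ tailIdeal x m := by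
  refine Ideal.span_le.mpr ?_
  rintro _ ⟨j, hj, rfl⟩
  exact Ideal.subset_span ⟨Fin.castLE h j, hj, rfl⟩

theorem tailIdeal_pow_le {nn : Fin d → ℕ} (hnn : ∀ j, 1 ≤ nn j) (m : ℕ) :
    tailIdeal (fun j => x j ^ nn j) m ≤ tailIdeal x m := by
  refine Ideal.span_le.mpr ?_
  rintro _ ⟨j, hj, rfl⟩
  exact Ideal.pow_mem_of_mem (tailIdeal x m) (Ideal.subset_span ⟨j, hj, rfl⟩) _ (hnn j)

end tailIdeal

section SOP

variable [IsLocalRing R] {d t : ℕ} {x : Fin d → R} {D : Fin (t + 1) → Submodule R M}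
  {ds : Fin (t + 1) → ℕ}

theorem IsGoodSOP.tailIdeal_le_annihilator (hx : IsGoodSOP R M D ds x)
    (hlast : d ≤ ds (Fin.last t)) (i : Fin (t + 1)) :
    tailIdeal x (ds i) ≤ Module.annihilator R (D i) := by
  by_cases hi : (i : ℕ) < t
  · rw [Submodule.le_annihilator_iff, ← le_bot_iff, ← hx.2 i hi]
    exact le_inf Submodule.smul_le_right (smul_mono_right _ le_top)
  · obtain rfl : i = Fin.last t := Fin.ext (by have := i.isLt; simp only [Fin.val_last]; omega)
    rw [tailIdeal_eq_bot_of_le x hlast]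
    exact bot_le

variable [IsNoetherianRing R] [Module.Finite R M]

theorem IsSOP.truncate {N : Submodule R M} {m : ℕ} (hmd : m ≤ d) (hx : IsSOP R M x)
    (htail : tailIdeal x m ≤ Module.annihilator R N) :
    IsSOP R N (fun j : Fin m => x (Fin.castLE hmd j)) := by
  refine ⟨fun j => hx.1 _, isFiniteLength_quotient_smul_top_of_le_radical hx.2 ?_⟩
  refine sup_le ?_ ((LinearMap.annihilator_le_of_injective _ N.injective_subtype).trans ?_)
  · exact (span_range_le_span_range_castLE_sup_tailIdeal x hmd).trans
      ((sup_le_sup_left htail _).trans Ideal.le_radical)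
  · exact le_sup_right.trans Ideal.le_radical

theorem IsSOP.pow (hx : IsSOP R M x) {nn : Fin d → ℕ} (hnn : ∀ j, 1 ≤ nn j) :
    IsSOP R M (fun j => x j ^ nn j) := by
  refine ⟨fun j => Ideal.pow_mem_of_mem _ (hx.1 j) _ (hnn j),
    isFiniteLength_quotient_smul_top_of_le_radical hx.2
      (sup_le ?_ (le_sup_right.trans Ideal.le_radical))⟩
  refine Ideal.span_le.mpr ?_
  rintro _ ⟨j, rfl⟩
  exact Ideal.radical_mono le_sup_left ⟨nn j, Ideal.subset_span (Set.mem_range_self j)⟩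

theorem IsGoodSOP.truncate (hx : IsGoodSOP R M D ds x) (hlast : d ≤ ds (Fin.last t))
    (i : Fin (t + 1)) (hi : ds i ≤ d) :
    IsGoodSOP R (D i)
      (fun k : Fin ((i : ℕ) + 1) => (D (Fin.castLE i.isLt k)).comap (D i).subtype)
      (fun k : Fin ((i : ℕ) + 1) => ds (Fin.castLE i.isLt k))
      (fun j : Fin (ds i) => x (Fin.castLE hi j)) :=
  ⟨hx.1.truncate hi (hx.tailIdeal_le_annihilator hlast i), fun k hk =>
    Submodule.comap_subtype_inf_smul_top_eq_bot (tailIdeal_castLE_le x hi _)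
      (hx.2 _ (by simp only [Fin.val_castLE]; omega))⟩

theorem IsGoodSOP.pow (hx : IsGoodSOP R M D ds x) {nn : Fin d → ℕ} (hnn : ∀ j, 1 ≤ nn j) :
    IsGoodSOP R M D ds (fun j => x j ^ nn j) :=
  ⟨hx.1.pow hnn, fun i hi =>
    eq_bot_mono (inf_le_inf_left _ (Submodule.smul_mono_left (tailIdeal_pow_le x hnn _)))
      (hx.2 i hi)⟩

end SOP

theorem moduleDim_top :
    moduleDim R (⊤ : Submodule R M) = moduleDim R M := by
  rw [moduleDim, moduleDim, Submodule.topEquiv.annihilator_eq]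

theorem moduleDim_eq_bot_of_subsingleton [Subsingleton M] : moduleDim R M = ⊥ := by
  rw [moduleDim, (Module.annihilator_eq_top_iff).mpr ‹_›]
  exact ringKrullDim_eq_bot_of_subsingleton

end SystemOfParameters

/-- If `x₁,…,x_d` is a good system of parameters of `M`, then (a) each truncation
`x₁,…,x_{d_i}` is a good system of parameters of `D_i` (whose dimension filtration is
the truncation of that of `M`), and (b) `x₁^{n₁},…,x_d^{n_d}` is again a good system of
parameters of `M` for all positive `n₁,…,n_d`. -/
theorem stmt_16 {R : Type*} [CommRing R] [IsLocalRing R] [IsNoetherianRing R]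
    {M : Type*} [AddCommGroup M] [Module R M] [Module.Finite R M]
    {d t : ℕ} (hd : moduleDim R M = (d : WithBot ℕ∞))
    (D : Fin (t + 1) → Submodule R M) (hD : IsDimFiltration R M D)
    (ds : Fin (t + 1) → ℕ)
    (hds : ∀ i, (D i = ⊥ ∧ ds i = 0) ∨ moduleDim R ↥(D i) = (ds i : WithBot ℕ∞))
    (hdsd : ∀ i, ds i ≤ d)
    (x : Fin d → R) (hx : IsGoodSOP R M D ds x) :
    (∀ i : Fin (t + 1), 1 ≤ (i : ℕ) →
        IsGoodSOP R ↥(D i)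
          (fun k : Fin ((i : ℕ) + 1) => (D (Fin.castLE i.isLt k)).comap (D i).subtype)
          (fun k : Fin ((i : ℕ) + 1) => ds (Fin.castLE i.isLt k))
          (fun j : Fin (ds i) => x (Fin.castLE (hdsd i) j))) ∧
      ∀ nn : Fin d → ℕ, (∀ j, 1 ≤ nn j) →
        IsGoodSOP R M D ds (fun j => x j ^ nn j) := by
  have hlast : d ≤ ds (Fin.last t) := by
    rcases hds (Fin.last t) with ⟨hbot, -⟩ | hdim
    · have : Subsingleton M := (Submodule.subsingleton_iff R).mp
        (subsingleton_iff_bot_eq_top.mp (hbot.symm.trans hD.2.1))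
      simp [moduleDim_eq_bot_of_subsingleton] at hd
    · rw [hD.2.1, moduleDim_top, hd] at hdim
      exact_mod_cast hdim.le
  exact ⟨fun i _ => hx.truncate hlast i (hdsd i), fun nn hnn => hx.pow hnn⟩
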